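/- Each Mahalanobis distance is bounded by 1: with V = ∑_{i=1}^n (X_i - X̄)(X_i - X̄)^T invertible, for every i one has 0 ≤ (X_i - X̄)^T V^{-1} (X_i - X̄) ≤ 1. -/

import Mathlib

/-!
Put `w := V⁻¹ yᵢ` with `yⱼ := Xⱼ - X̄`. Then `dᵢ = yᵢ ⬝ w = w ⬝ V w = ∑ⱼ (yⱼ ⬝ w)²`, a sum of squares
containing the term `(yᵢ ⬝ w)² = dᵢ²`. Hence `0 ≤ dᵢ² ≤ dᵢ`, i.e. `0 ≤ dᵢ ≤ 1`.
-/

open Matrix Finset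

variable {ι m R : Type*} [Fintype ι] [Fintype m]

lemma dotProduct_sum_vecMulVec_self_mulVec [CommRing R] (y : ι → m → R) (w : m → R) :
    w ⬝ᵥ ((∑ j, vecMulVec (y j) (y j)) *ᵥ w) = ∑ j, (y j ⬝ᵥ w) ^ 2 := by
  rw [sum_mulVec, dotProduct_sum]
  refine sum_congr rfl fun j _ => ?_
  rw [vecMulVec_mulVec, op_smul_eq_smul, dotProduct_smul, smul_eq_mul, dotProduct_comm w, sq]

lemma dotProduct_inv_mulVec_eq_sum_sq [CommRing R] [DecidableEq m] (y : ι → m → R)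
    (V : Matrix m m R) (hV : V = ∑ j, vecMulVec (y j) (y j)) (hVinv : IsUnit V) (i : ι) :
    y i ⬝ᵥ (V⁻¹ *ᵥ y i) = ∑ j, (y j ⬝ᵥ (V⁻¹ *ᵥ y i)) ^ 2 := by
  set w := V⁻¹ *ᵥ y i
  have hVw : V *ᵥ w = y i := by
    rw [mulVec_mulVec, mul_nonsing_inv V ((isUnit_iff_isUnit_det V).mp hVinv), one_mulVec]
  calc y i ⬝ᵥ w = w ⬝ᵥ (V *ᵥ w) := by rw [hVw, dotProduct_comm]
    _ = ∑ j, (y j ⬝ᵥ w) ^ 2 := by rw [hV, dotProduct_sum_vecMulVec_self_mulVec]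

lemma mem_Icc_of_eq_sum_sq [CommRing R] [LinearOrder R] [IsStrictOrderedRing R]
    {f : ι → R} {d : R} (hd : d = ∑ j, f j ^ 2) {i : ι} (hi : f i = d) : d ∈ Set.Icc 0 1 := by
  have hd0 : 0 ≤ d := hd ▸ sum_nonneg fun j _ => sq_nonneg (f j)
  have hdsq : d ^ 2 ≤ d := calc
    d ^ 2 = f i ^ 2 := by rw [hi]
    _ ≤ ∑ j, f j ^ 2 := single_le_sum (fun j _ => sq_nonneg (f j)) (mem_univ i)
    _ = d := hd.symm
  exact ⟨hd0, by nlinarith⟩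

lemma dotProduct_inv_mulVec_mem_Icc [CommRing R] [LinearOrder R] [IsStrictOrderedRing R]
    [DecidableEq m] (y : ι → m → R) (V : Matrix m m R) (hV : V = ∑ j, vecMulVec (y j) (y j))
    (hVinv : IsUnit V) (i : ι) : y i ⬝ᵥ (V⁻¹ *ᵥ y i) ∈ Set.Icc 0 1 :=
  mem_Icc_of_eq_sum_sq (dotProduct_inv_mulVec_eq_sum_sq y V hV hVinv i) rfl

theorem mahalanobis_distance_bounds_general
    (p n : ℕ) (X : Fin n → Fin p → ℝ)
    (Xbar : Fin p → ℝ)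
    (V : Matrix (Fin p) (Fin p) ℝ)
    (hV : V = ∑ i, vecMulVec (X i - Xbar) (X i - Xbar))
    (hVinv : IsUnit V) :
    ∀ i : Fin n, 0 ≤ (X i - Xbar) ⬝ᵥ (V⁻¹ *ᵥ (X i - Xbar)) ∧
      (X i - Xbar) ⬝ᵥ (V⁻¹ *ᵥ (X i - Xbar)) ≤ 1 :=
  dotProduct_inv_mulVec_mem_Icc (fun j => X j - Xbar) V hV hVinv

theorem mahalanobis_distance_bounds
    (p n : ℕ) (X : Fin n → Fin p → ℝ)
    (Xbar : Fin p → ℝ) (hXbar : Xbar = (n : ℝ)⁻¹ • ∑ i, X i)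
    (V : Matrix (Fin p) (Fin p) ℝ)
    (hV : V = ∑ i, vecMulVec (X i - Xbar) (X i - Xbar))
    (hVinv : IsUnit V) :
    ∀ i : Fin n, 0 ≤ (X i - Xbar) ⬝ᵥ (V⁻¹ *ᵥ (X i - Xbar)) ∧
      (X i - Xbar) ⬝ᵥ (V⁻¹ *ᵥ (X i - Xbar)) ≤ 1 :=
  mahalanobis_distance_bounds_general p n X Xbar V hV hVinv
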